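/- Let y be obtained from a binary string x by deleting two symbols both equal to 1. If N_{1111}(x) ≡ N_{1111}(y) (mod 7), then the string 1111 is preserved from x to y. -/

import Mathlib

/-- Delete from `x` the symbols at the positions in `S`. -/
def deleteIdxs (x : List Bool) (S : Finset ℕ) : List Bool :=
  ((List.range x.length).filter (fun i => decide (i ∉ S))).map (fun i => x.getD i false)

/-- `w` occurs in `x` at position `i`. -/
def occursAt (w x : List Bool) (i : ℕ) : Prop := w <+: x.drop i

/-- The number of (possibly overlapping) occurrences of `w` in `x`. -/
def Nw (w x : List Bool) : ℕ :=
  ((Finset.range x.length).filter (fun i => w <+: x.drop i)).card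

/-- The position in the shortened string of the junction produced by deleting position `k`. -/
def junction (S : Finset ℕ) (k : ℕ) : ℕ :=
  ((Finset.range k).filter (fun m => m ∉ S)).card

/-- `w` is preserved from `x` to `y`: some set `S` of deleted positions realizing `y`
destroys no occurrence of `w` in `x` and no occurrence of `w` in `y` spans a junction. -/
def Preserved (w x y : List Bool) : Prop :=
  ∃ S : Finset ℕ,
    (∀ k ∈ S, k < x.length) ∧
    S.card + y.length = x.length ∧
    deleteIdxs x S = y ∧
    (∀ i, occursAt w x i → ∀ k ∈ S, ¬ (i ≤ k ∧ k < i + w.length)) ∧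
    (∀ j, occursAt w y j → ∀ k ∈ S, ¬ (j < junction S k ∧ junction S k < j + w.length))

/-- `x` has a (maximal) run of length `ℓ` starting at position `i`. -/
def runAt (x : List Bool) (i ℓ : ℕ) : Prop :=
  0 < ℓ ∧ i + ℓ ≤ x.length ∧
  (∀ j, i ≤ j → j < i + ℓ → x.getD j false = x.getD i false) ∧
  (i = 0 ∨ x.getD (i - 1) false ≠ x.getD i false) ∧
  (i + ℓ = x.length ∨ x.getD (i + ℓ) false ≠ x.getD i false)

/-- position `k` of `x` lies in a run of length `ℓ`. -/
def inRun (x : List Bool) (k ℓ : ℕ) : Prop := ∃ i, runAt x i ℓ ∧ i ≤ k ∧ k < i + ℓ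

def w0000 : List Bool := [false, false, false, false]
def w1111 : List Bool := [true, true, true, true]
def w11011 : List Bool := [true, true, false, true, true]
def w110011 : List Bool := [true, true, false, false, true, true]

/-- The set of strings obtainable from `x` by deleting two symbols. -/
def D2 (x : List Bool) : Set (List Bool) :=
  { y | ∃ i j : ℕ, i < j ∧ j < x.length ∧ y = deleteIdxs x ({i, j} : Finset ℕ) }

/-- run-length representation of the runs of ones, in order. -/
def tau1 (x : List Bool) : List ℕ :=
  ((x.splitBy (· == ·)).filter (fun r => r.headD false)).map List.length

/-- the subsequence of `tau1` of entries at least 2. -/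
def tauGe2 (x : List Bool) : List ℕ := (tau1 x).filter (fun ℓ => decide (2 ≤ ℓ))

/-- sum of the odd-indexed entries. -/
def oddIdxSum (l : List ℕ) : ℕ :=
  ((Finset.range l.length).filter (fun i => i % 2 = 1)).sum (fun i => l.getD i 0)

/-!
Deleting a single `1` at position `k` lowers the number of occurrences of `1^r` by at most one, and
strictly exactly when some occurrence contains `k`: the shift `skipIdx k` embeds the occurrences of
`x.eraseIdx k` into those of `x`, and the only occurrence it can miss is the last one starting at or
before `k`. Deleting the two ones one after the other, `N(x) - N(y) ∈ {0, 1, 2}`, so the congruence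
mod 7 forces both steps to keep the count. Hence no occurrence of `1111` in `x` meets a deleted
position, and an occurrence in `y` across a junction would, with the deleted ones put back, give one
that does.
-/

open Finset

def Covers (w x : List Bool) (k : ℕ) : Prop := ∃ i, occursAt w x i ∧ i ≤ k ∧ k < i + w.length

theorem occursAt_replicate_true_iff {r : ℕ} {z : List Bool} {i : ℕ} :
    occursAt (List.replicate r true) z i ↔ ∀ p, i ≤ p → p < i + r → z[p]? = some true := by
  simp only [occursAt, List.prefix_iff_getElem?, List.getElem?_drop, List.length_replicate,
    List.getElem_replicate]
  refine ⟨fun h p hip hpr => ?_, fun h t ht => h _ (by omega) (by omega)⟩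
  simpa [Nat.add_sub_cancel' hip] using h (p - i) (by omega)

theorem getD_false_eq_true_iff {z : List Bool} {k : ℕ} :
    z.getD k false = true ↔ z[k]? = some true := by
  rw [List.getD_eq_getElem?_getD]
  cases z[k]? <;> simp

def occurrences (w x : List Bool) : Finset ℕ :=
  (range x.length).filter (fun i => w <+: x.drop i)

theorem Nw_eq_card_occurrences (w x : List Bool) : Nw w x = (occurrences w x).card := rfl

theorem mem_occurrences {w x : List Bool} (hw : w ≠ []) {i : ℕ} :
    i ∈ occurrences w x ↔ occursAt w x i := by
  refine ⟨fun h => (mem_filter.mp h).2, fun h => mem_filter.mpr ⟨mem_range.mpr ?_, h⟩⟩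
  have := h.length_le
  rw [List.length_drop] at this
  have := List.length_pos_iff.mpr hw
  omega

-- `Nat.findGreatest` gives the junk value `0` when no occurrence starts at or before `k`.
open Classical in
noncomputable def lastOccurrence (w x : List Bool) (k : ℕ) : ℕ :=
  Nat.findGreatest (occursAt w x) k

section LastOccurrence

variable {w x : List Bool} {i k : ℕ}

theorem lastOccurrence_le : lastOccurrence w x k ≤ k := by
  classical exact Nat.findGreatest_le k

theorem le_lastOccurrence (hi : occursAt w x i) (hik : i ≤ k) : i ≤ lastOccurrence w x k := by
  classical exact Nat.le_findGreatest hik hi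

theorem occursAt_lastOccurrence (hi : occursAt w x i) (hik : i ≤ k) :
    occursAt w x (lastOccurrence w x k) := by
  classical exact Nat.findGreatest_spec hik hi

end LastOccurrence

section PairDeletion

variable {x : List Bool} {k₁ k₂ : ℕ}

theorem map_getD_range (x : List Bool) : (List.range x.length).map (x.getD · false) = x := by
  apply List.ext_getElem (by simp)
  intro i h1 h2
  simp [List.getD_eq_getElem?_getD, List.getElem?_eq_getElem h2]

theorem filter_range_eq_eraseIdx_eraseIdx {n : ℕ} (h12 : k₁ < k₂) (h2 : k₂ < n) :
    (List.range n).filter (fun i => decide (i ∉ ({k₁, k₂} : Finset ℕ))) =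
      ((List.range n).eraseIdx k₂).eraseIdx k₁ := by
  have hnd := List.nodup_range (n := n)
  have e₂ : (List.range n).eraseIdx k₂ = (List.range n).erase k₂ := by
    rw [← hnd.erase_getElem k₂ (by simpa), List.getElem_range]
  have e₁ : ((List.range n).eraseIdx k₂).eraseIdx k₁ = ((List.range n).eraseIdx k₂).erase k₁ := by
    have hl : k₁ < ((List.range n).eraseIdx k₂).length := by
      rw [List.length_eraseIdx_of_lt (by simpa), List.length_range]; omega
    rw [← (hnd.eraseIdx k₂).erase_getElem k₁ hl, List.getElem_eraseIdx_of_lt _ h12,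
      List.getElem_range]
  rw [e₁, e₂, (hnd.erase k₂).erase_eq_filter, hnd.erase_eq_filter, List.filter_filter]
  congr 1
  funext i
  by_cases i = k₁ <;> by_cases i = k₂ <;> simp_all

theorem deleteIdxs_pair (h12 : k₁ < k₂) (h2 : k₂ < x.length) :
    deleteIdxs x {k₁, k₂} = (x.eraseIdx k₂).eraseIdx k₁ := by
  rw [deleteIdxs, filter_range_eq_eraseIdx_eraseIdx h12 h2, ← List.eraseIdx_map,
    ← List.eraseIdx_map, map_getD_range]

theorem junction_pair_left (h12 : k₁ < k₂) : junction {k₁, k₂} k₁ = k₁ := by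
  have : ∀ m ∈ range k₁, m ∉ ({k₁, k₂} : Finset ℕ) := fun m hm => by
    simp only [mem_range, mem_insert, mem_singleton, not_or] at hm ⊢
    omega
  rw [junction, filter_true_of_mem this, card_range]

theorem junction_pair_right (h12 : k₁ < k₂) : junction {k₁, k₂} k₂ = k₂ - 1 := by
  have : (range k₂).filter (fun m => m ∉ ({k₁, k₂} : Finset ℕ)) = (range k₂).erase k₁ := by
    ext m
    simp only [mem_insert, mem_singleton, not_or, mem_filter, mem_range, mem_erase, ne_eq]
    omega
  rw [junction, this, card_erase_of_mem (mem_range.mpr h12), card_range]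

end PairDeletion

def skipIdx (k j : ℕ) : ℕ := if j < k then j else j + 1

theorem skipIdx_strictMono (k : ℕ) : StrictMono (skipIdx k) := by
  intro a b h
  unfold skipIdx
  split_ifs <;> omega

theorem getElem?_eraseIdx_eq_skipIdx (x : List Bool) (k j : ℕ) :
    (x.eraseIdx k)[j]? = x[skipIdx k j]? := by
  rw [List.getElem?_eraseIdx, skipIdx]
  split_ifs <;> rfl

section DeletingOnes

variable {r k k₁ k₂ : ℕ} {x : List Bool}

local notation "ones" => List.replicate r true

theorem occursAt_eraseIdx_iff_of_add_le {j : ℕ} (h : j + r ≤ k) :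
    occursAt ones (x.eraseIdx k) j ↔ occursAt ones x j := by
  simp only [occursAt_replicate_true_iff]
  exact forall_congr' fun p => imp_congr_right fun _ => imp_congr_right fun _ => by
    rw [List.getElem?_eraseIdx_of_lt (by omega)]

theorem occursAt_eraseIdx_iff_of_le {j : ℕ} (h : k ≤ j) :
    occursAt ones (x.eraseIdx k) j ↔ occursAt ones x (j + 1) := by
  simp only [occursAt_replicate_true_iff]
  constructor
  · intro H p h1 h2
    simpa [List.getElem?_eraseIdx_of_ge (show k ≤ p - 1 by omega),
      Nat.sub_add_cancel (show 1 ≤ p by omega)] using H (p - 1) (by omega) (by omega)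
  · intro H p h1 h2
    rw [List.getElem?_eraseIdx_of_ge (by omega)]
    exact H _ (by omega) (by omega)

theorem occursAt_skipIdx_of_occursAt_eraseIdx (hk : x[k]? = some true) {j : ℕ}
    (h : occursAt ones (x.eraseIdx k) j) : occursAt ones x (skipIdx k j) := by
  unfold skipIdx
  split_ifs with hjk
  · rw [occursAt_replicate_true_iff] at h ⊢
    intro p h1 h2
    rcases lt_trichotomy p k with hp | rfl | hp
    · rw [← List.getElem?_eraseIdx_of_lt hp]
      exact h p h1 h2
    · exact hk
    · simpa [List.getElem?_eraseIdx_of_ge (show k ≤ p - 1 by omega),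
        Nat.sub_add_cancel (show 1 ≤ p by omega)] using h (p - 1) (by omega) (by omega)
  · exact (occursAt_eraseIdx_iff_of_le (by omega)).mp h

theorem occursAt_eraseIdx_of_lt {i m : ℕ} (hi : occursAt ones x i) (hm : occursAt ones x m)
    (him : i < m) (hmk : m ≤ k) : occursAt ones (x.eraseIdx k) i := by
  rw [occursAt_replicate_true_iff] at hi hm ⊢
  intro p h1 h2
  rw [getElem?_eraseIdx_eq_skipIdx, skipIdx]
  split_ifs
  · exact hi p h1 h2
  · exact hm _ (by omega) (by omega)

theorem occursAt_succ_of_occursAt_eraseIdx {m : ℕ} (hr : 0 < r) (hm : occursAt ones x m)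
    (hm' : occursAt ones (x.eraseIdx k) m) (hkm : k < m + r) : occursAt ones x (m + 1) := by
  rw [occursAt_replicate_true_iff] at hm hm' ⊢
  intro p h1 h2
  rcases Nat.lt_or_ge p (m + r) with hp | hp
  · exact hm p (by omega) hp
  · have := hm' (m + r - 1) (by omega) (by omega)
    rwa [List.getElem?_eraseIdx_of_ge (by omega), show m + r - 1 + 1 = p by omega] at this

theorem exists_occursAt_eraseIdx_skipIdx_eq {i : ℕ} (hi : occursAt ones x i)
    (hne : i ≠ lastOccurrence ones x k) :
    ∃ j, occursAt ones (x.eraseIdx k) j ∧ skipIdx k j = i := by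
  rcases Nat.lt_or_ge k i with hki | hik
  · refine ⟨i - 1, (occursAt_eraseIdx_iff_of_le (by omega)).mpr ?_, ?_⟩
    · rwa [Nat.sub_add_cancel (by omega)]
    · unfold skipIdx
      split_ifs <;> omega
  · have := le_lastOccurrence hi hik
    have hle := lastOccurrence_le (w := ones) (x := x) (k := k)
    refine ⟨i, occursAt_eraseIdx_of_lt hi (occursAt_lastOccurrence hi hik) (by omega) hle, ?_⟩
    unfold skipIdx
    split_ifs <;> omega

theorem skipIdx_ne_lastOccurrence (hr : 0 < r) (hc : Covers ones x k) {j : ℕ}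
    (hj : occursAt ones (x.eraseIdx k) j) : skipIdx k j ≠ lastOccurrence ones x k := by
  obtain ⟨i, hi, hik, hki⟩ := hc
  rw [List.length_replicate] at hki
  have hm := occursAt_lastOccurrence hi hik
  have := le_lastOccurrence hi hik
  have := lastOccurrence_le (w := ones) (x := x) (k := k)
  intro h
  unfold skipIdx at h
  split_ifs at h with hjk
  · subst h
    have := le_lastOccurrence (occursAt_succ_of_occursAt_eraseIdx hr hm hj (by omega)) hjk
    omega
  · omega

theorem Nw_eraseIdx_le (hr : 0 < r) (hk : x[k]? = some true) :
    Nw ones (x.eraseIdx k) ≤ Nw ones x := by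
  have hw : ones ≠ [] := List.ne_nil_of_length_pos (by simpa using hr)
  simp only [Nw_eq_card_occurrences]
  exact card_le_card_of_injOn (skipIdx k)
    (fun j hj => (mem_occurrences hw).mpr
      (occursAt_skipIdx_of_occursAt_eraseIdx hk ((mem_occurrences hw).mp hj)))
    (skipIdx_strictMono k).injective.injOn

theorem Nw_le_Nw_eraseIdx_add_one (hr : 0 < r) : Nw ones x ≤ Nw ones (x.eraseIdx k) + 1 := by
  have hw : ones ≠ [] := List.ne_nil_of_length_pos (by simpa using hr)
  simp only [Nw_eq_card_occurrences]
  have hsub : (occurrences ones x).erase (lastOccurrence ones x k) ⊆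
      (occurrences ones (x.eraseIdx k)).image (skipIdx k) := by
    intro i hi
    obtain ⟨hne, hi⟩ := mem_erase.mp hi
    obtain ⟨j, hj, rfl⟩ := exists_occursAt_eraseIdx_skipIdx_eq ((mem_occurrences hw).mp hi) hne
    exact mem_image_of_mem _ ((mem_occurrences hw).mpr hj)
  have := card_le_card hsub
  have := pred_card_le_card_erase (s := occurrences ones x) (a := lastOccurrence ones x k)
  have := card_image_le (s := occurrences ones (x.eraseIdx k)) (f := skipIdx k)
  omega

theorem Nw_eraseIdx_lt (hr : 0 < r) (hk : x[k]? = some true) (hc : Covers ones x k) :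
    Nw ones (x.eraseIdx k) < Nw ones x := by
  have hw : ones ≠ [] := List.ne_nil_of_length_pos (by simpa using hr)
  simp only [Nw_eq_card_occurrences]
  have hmem : lastOccurrence ones x k ∈ occurrences ones x := by
    obtain ⟨i, hi, hik, -⟩ := hc
    exact (mem_occurrences hw).mpr (occursAt_lastOccurrence hi hik)
  have hsub : (occurrences ones (x.eraseIdx k)).image (skipIdx k) ⊆
      (occurrences ones x).erase (lastOccurrence ones x k) := by
    intro i hi
    obtain ⟨j, hj, rfl⟩ := mem_image.mp hi
    have hj := (mem_occurrences hw).mp hj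
    exact mem_erase.mpr ⟨skipIdx_ne_lastOccurrence hr hc hj,
      (mem_occurrences hw).mpr (occursAt_skipIdx_of_occursAt_eraseIdx hk hj)⟩
  have := card_le_card hsub
  rw [card_image_of_injective _ (skipIdx_strictMono k).injective, card_erase_of_mem hmem] at this
  have := card_pos.mpr ⟨_, hmem⟩
  omega

theorem covers_of_occursAt_eraseIdx {j : ℕ} (hk : x[k]? = some true)
    (hj : occursAt ones (x.eraseIdx k) j) (hjk : j < k) (hkj : k < j + r) : Covers ones x k := by
  refine ⟨j, ?_, hjk.le, by simpa⟩
  simpa [skipIdx, hjk] using occursAt_skipIdx_of_occursAt_eraseIdx hk hj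

theorem occursAt_avoids_pair (h12 : k₁ < k₂) (hx₂ : ¬ Covers ones x k₂)
    (hx₁ : ¬ Covers ones (x.eraseIdx k₂) k₁) {i : ℕ} (hi : occursAt ones x i) :
    ∀ k ∈ ({k₁, k₂} : Finset ℕ), ¬ (i ≤ k ∧ k < i + (ones).length) := by
  simp only [mem_insert, mem_singleton, List.length_replicate]
  rintro k (rfl | rfl) ⟨hik, hki⟩
  · rcases Nat.lt_or_ge k₂ (i + r) with h | h
    · exact hx₂ ⟨i, hi, by omega, by simpa⟩
    · exact hx₁ ⟨i, (occursAt_eraseIdx_iff_of_add_le h).mpr hi, hik, by simpa⟩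
  · exact hx₂ ⟨i, hi, hik, by simpa⟩

theorem occursAt_avoids_junction_pair (h12 : k₁ < k₂) (hv₁ : x[k₁]? = some true)
    (hv₂ : x[k₂]? = some true) (hx₂ : ¬ Covers ones x k₂)
    (hx₁ : ¬ Covers ones (x.eraseIdx k₂) k₁) {j : ℕ}
    (hj : occursAt ones ((x.eraseIdx k₂).eraseIdx k₁) j) :
    ∀ k ∈ ({k₁, k₂} : Finset ℕ),
      ¬ (j < junction {k₁, k₂} k ∧ junction {k₁, k₂} k < j + (ones).length) := by
  have hv₁' : (x.eraseIdx k₂)[k₁]? = some true := by rwa [List.getElem?_eraseIdx_of_lt h12]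
  have across₁ : ¬ (j < k₁ ∧ k₁ < j + r) := fun h =>
    hx₁ (covers_of_occursAt_eraseIdx hv₁' hj h.1 h.2)
  simp only [mem_insert, mem_singleton, List.length_replicate]
  rintro k (rfl | rfl)
  · rwa [junction_pair_left h12]
  · rw [junction_pair_right h12]
    rintro ⟨h1, h2⟩
    rcases Nat.lt_or_ge j k₁ with hjk | hkj
    · exact across₁ ⟨hjk, by omega⟩
    · exact hx₂ (covers_of_occursAt_eraseIdx hv₂ ((occursAt_eraseIdx_iff_of_le hkj).mp hj)
        (by omega) (by omega))

theorem preserved_deleteIdxs_pair (h12 : k₁ < k₂) (h2 : k₂ < x.length)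
    (hv₁ : x[k₁]? = some true) (hv₂ : x[k₂]? = some true) (hx₂ : ¬ Covers ones x k₂)
    (hx₁ : ¬ Covers ones (x.eraseIdx k₂) k₁) :
    Preserved ones x (deleteIdxs x {k₁, k₂}) := by
  refine ⟨{k₁, k₂}, ?_, ?_, rfl, fun i hi => occursAt_avoids_pair h12 hx₂ hx₁ hi,
    fun j hj => ?_⟩
  · simp only [mem_insert, mem_singleton]
    omega
  · rw [deleteIdxs_pair h12 h2, card_pair h12.ne,
      List.length_eraseIdx_of_lt (by rw [List.length_eraseIdx_of_lt h2]; omega),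
      List.length_eraseIdx_of_lt h2]
    omega
  · rw [deleteIdxs_pair h12 h2] at hj
    exact occursAt_avoids_junction_pair h12 hv₁ hv₂ hx₂ hx₁ hj

end DeletingOnes

/-- If two ones are deleted and `N₁₁₁₁(x) ≡ N₁₁₁₁(y) (mod 7)`, then `1111` is preserved. -/
theorem two_ones_1111_preserved (x y : List Bool) (k₁ k₂ : ℕ)
    (h12 : k₁ < k₂) (h2 : k₂ < x.length)
    (hv1 : x.getD k₁ false = true) (hv2 : x.getD k₂ false = true)
    (hy : y = deleteIdxs x ({k₁, k₂} : Finset ℕ))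
    (hmod : Nw w1111 x ≡ Nw w1111 y [MOD 7]) :
    Preserved w1111 x y := by
  rw [getD_false_eq_true_iff] at hv1 hv2
  have hv1' : (x.eraseIdx k₂)[k₁]? = some true := by rwa [List.getElem?_eraseIdx_of_lt h12]
  have hy' : y = (x.eraseIdx k₂).eraseIdx k₁ := hy.trans (deleteIdxs_pair h12 h2)
  have h₁ : Nw w1111 (x.eraseIdx k₂) ≤ Nw w1111 x := Nw_eraseIdx_le (r := 4) four_pos hv2
  have h₂ : Nw w1111 x ≤ Nw w1111 (x.eraseIdx k₂) + 1 :=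
    Nw_le_Nw_eraseIdx_add_one (r := 4) four_pos
  have h₃ : Nw w1111 y ≤ Nw w1111 (x.eraseIdx k₂) := hy' ▸ Nw_eraseIdx_le (r := 4) four_pos hv1'
  have h₄ : Nw w1111 (x.eraseIdx k₂) ≤ Nw w1111 y + 1 :=
    hy' ▸ Nw_le_Nw_eraseIdx_add_one (r := 4) four_pos
  unfold Nat.ModEq at hmod
  have hx : Nw w1111 (x.eraseIdx k₂) = Nw w1111 x := by omega
  have hx' : Nw w1111 ((x.eraseIdx k₂).eraseIdx k₁) = Nw w1111 (x.eraseIdx k₂) := by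
    rw [← hy']; omega
  rw [hy]
  exact preserved_deleteIdxs_pair (r := 4) h12 h2 hv1 hv2
    (fun hc => (Nw_eraseIdx_lt four_pos hv2 hc).ne hx)
    (fun hc => (Nw_eraseIdx_lt four_pos hv1' hc).ne hx')
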